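/- arXiv:2304.05770 — 3 statements merged into one kernel-verified Lean document; each statement's English description precedes it below -/
import Mathlib

section
/- Let P be a symmetric positive semidefinite n×n real matrix and C a q×n real matrix such that C P Cᵀ is positive definite. Then the measurement-updated matrix P − P Cᵀ (C P Cᵀ)⁻¹ C P is symmetric positive semidefinite. -/
open Matrix

namespace Matrix

variable {m n K : Type*} [Fintype n]

lemma fromRows_one_mul_mul_conjTranspose [Ring K] [StarRing K] [DecidableEq n]
    (A : Matrix n n K) (B : Matrix m n K) :
    fromRows B 1 * A * (fromRows B 1)ᴴ = fromBlocks (B * A * Bᴴ) (B * A) (A * Bᴴ) A := by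
  rw [fromRows_mul, conjTranspose_fromRows_eq_fromCols_conjTranspose, fromRows_mul_fromCols]
  simp only [Matrix.one_mul, conjTranspose_one, Matrix.mul_one]

/-- The left side is the Schur complement of `B * A * Bᴴ` in the positive semidefinite block
matrix `[B; 1] * A * [B; 1]ᴴ`. -/
theorem PosSemidef.sub_mul_conjTranspose_mul_inv_mul [Fintype m] [Field K] [PartialOrder K]
    [StarRing K] [StarOrderedRing K] [DecidableEq m] [DecidableEq n]
    {A : Matrix n n K} {B : Matrix m n K}
    (hA : A.PosSemidef) (hBAB : (B * A * Bᴴ).PosDef) :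
    (A - A * Bᴴ * (B * A * Bᴴ)⁻¹ * (B * A)).PosSemidef := by
  have hblock : (fromBlocks (B * A * Bᴴ) (B * A) (B * A)ᴴ A).PosSemidef := by
    rw [conjTranspose_mul, hA.isHermitian.eq, ← fromRows_one_mul_mul_conjTranspose]
    exact hA.mul_mul_conjTranspose_same _
  let := hBAB.isUnit.invertible
  simpa only [conjTranspose_mul, hA.isHermitian.eq] using
    (PosDef.fromBlocks₁₁ _ _ hBAB).mp hblock

end Matrix

/-- **Kalman measurement update preserves positive semidefiniteness.** If `P` is a symmetric
positive semidefinite `n × n` real matrix and `C` a `q × n` real matrix such that `C * P * Cᵀ`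
is positive definite, then `P - P * Cᵀ * (C * P * Cᵀ)⁻¹ * C * P` is symmetric positive
semidefinite. -/
theorem kalman_update_posSemidef {n q : ℕ}
    (P : Matrix (Fin n) (Fin n) ℝ) (C : Matrix (Fin q) (Fin n) ℝ)
    (hP : P.PosSemidef) (hC : (C * P * Cᵀ).PosDef) :
    (P - P * Cᵀ * (C * P * Cᵀ)⁻¹ * (C * P)).PosSemidef := by
  rw [← conjTranspose_eq_transpose_of_trivial] at hC ⊢
  exact hP.sub_mul_conjTranspose_mul_inv_mul hC
end

section
/- Let A ∈ ℝ^{n×n}, C ∈ ℝ^{q×n}, and let Σ₀, Q ∈ ℝ^{n×n} be symmetric positive semidefinite with C Σ₀ Cᵀ and C Q Cᵀ positive definite. Define the Kalman covariance recursion: P̂(0) = Σ₀; for t ≥ 0, K(t) = P̂(t) Cᵀ (C P̂(t) Cᵀ)⁻¹, P̄(t) = P̂(t) − K(t) C P̂(t), and P̂(t+1) = A P̄(t) Aᵀ + Q. Define also Σ(0) = Σ₀, Σ(t+1) = A Σ(t) Aᵀ + Q, and Σ̄(0) = Σ₀ − P̄(0), Σ̄(t+1) = A Σ̄(t) Aᵀ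 + K(t+1) (C P̂(t+1) Cᵀ) K(t+1)ᵀ. Then for every t ≥ 0, Σ(t) = Σ̄(t) + P̄(t). -/
/-!
Subtracting the two covariance recursions, `Σ(t+1) - Σ̄(t+1) = A (Σ(t) - Σ̄(t)) Aᵀ + Q - K M Kᵀ`
with `M = C P̂(t+1) Cᵀ`. If `Σ(t) - Σ̄(t) = P̄(t)`, then `A P̄(t) Aᵀ + Q = P̂(t+1)`, and it remains
to see `K M Kᵀ = K C P̂(t+1)`. Since `P̂` stays symmetric, `Kᵀ = M⁻¹ C P̂`, so this is
`M⁻¹ M M⁻¹ = M⁻¹`, which holds for every square matrix, invertible or not.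
-/

open Matrix

namespace Matrix

variable {m n R : Type*} [CommRing R]

lemma IsHermitian.isSymm {α : Type*} [Star α] [TrivialStar α] {A : Matrix n n α}
    (hA : A.IsHermitian) : A.IsSymm :=
  (conjTranspose_eq_transpose_of_trivial A).symm.trans hA

lemma IsSymm.mul_mul_transpose [Fintype m] {N : Matrix m m R} (hN : N.IsSymm)
    (X : Matrix n m R) : (X * N * Xᵀ).IsSymm := by
  simp only [IsSymm, transpose_mul, transpose_transpose, hN.eq, Matrix.mul_assoc]

lemma nonsing_inv_mul_mul_nonsing_inv [Fintype m] [DecidableEq m] (A : Matrix m m R) :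
    A⁻¹ * A * A⁻¹ = A⁻¹ := by
  by_cases hA : IsUnit A.det
  · rw [nonsing_inv_mul A hA, Matrix.one_mul]
  · rw [nonsing_inv_apply_not_isUnit A hA, Matrix.zero_mul, Matrix.zero_mul]

variable [Fintype m] [Fintype n] [DecidableEq m]
  {P : Matrix n n R} {C : Matrix m n R} {K : Matrix n m R}

lemma IsSymm.sub_kalmanGain_mul_mul (hP : P.IsSymm) (hK : K = P * Cᵀ * (C * P * Cᵀ)⁻¹) :
    (P - K * C * P).IsSymm := by
  have hKCP : K * C * P = P * Cᵀ * (C * P * Cᵀ)⁻¹ * (P * Cᵀ)ᵀ := by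
    rw [hK, transpose_mul, hP.eq, transpose_transpose, Matrix.mul_assoc _ C]
  rw [hKCP]
  exact hP.sub (((hP.mul_mul_transpose C).inv).mul_mul_transpose (P * Cᵀ))

lemma kalmanGain_mul_mul_transpose (hP : P.IsSymm) (hK : K = P * Cᵀ * (C * P * Cᵀ)⁻¹) :
    K * (C * P * Cᵀ) * Kᵀ = K * C * P := by
  have hKT : Kᵀ = (C * P * Cᵀ)⁻¹ * C * P := by
    rw [hK, transpose_mul, (hP.mul_mul_transpose C).inv.eq, transpose_mul, hP.eq,
      transpose_transpose, Matrix.mul_assoc _ C]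
  calc K * (C * P * Cᵀ) * Kᵀ
      = P * Cᵀ * ((C * P * Cᵀ)⁻¹ * (C * P * Cᵀ) * (C * P * Cᵀ)⁻¹) * C * P := by
        rw [hKT, hK]; simp only [Matrix.mul_assoc]
    _ = K * C * P := by rw [nonsing_inv_mul_mul_nonsing_inv, hK]

end Matrix

theorem innovation_covariance_identity_general {n q : ℕ}
    (A : Matrix (Fin n) (Fin n) ℝ) (C : Matrix (Fin q) (Fin n) ℝ)
    (S0 Q : Matrix (Fin n) (Fin n) ℝ)
    (hS0 : S0.PosSemidef) (hQ : Q.PosSemidef)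
    (Phat Pbar : ℕ → Matrix (Fin n) (Fin n) ℝ) (K : ℕ → Matrix (Fin n) (Fin q) ℝ)
    (hPhat0 : Phat 0 = S0)
    (hK : ∀ t, K t = Phat t * Cᵀ * (C * Phat t * Cᵀ)⁻¹)
    (hPbar : ∀ t, Pbar t = Phat t - K t * C * Phat t)
    (hPhat : ∀ t, Phat (t + 1) = A * Pbar t * Aᵀ + Q)
    (S Sb : ℕ → Matrix (Fin n) (Fin n) ℝ)
    (hSzero : S 0 = S0)
    (hS : ∀ t, S (t + 1) = A * S t * Aᵀ + Q)
    (hSbzero : Sb 0 = S0 - Pbar 0)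
    (hSb : ∀ t, Sb (t + 1) = A * Sb t * Aᵀ + K (t + 1) * (C * Phat (t + 1) * Cᵀ) * (K (t + 1))ᵀ) :
    ∀ t, S t = Sb t + Pbar t := by
  have hPhat_symm : ∀ t, (Phat t).IsSymm := by
    intro t
    induction t with
    | zero => exact hPhat0 ▸ hS0.isHermitian.isSymm
    | succ t ih =>
      rw [hPhat t, hPbar t]
      exact ((ih.sub_kalmanGain_mul_mul (hK t)).mul_mul_transpose A).add hQ.isHermitian.isSymm
  intro t
  induction t with
  | zero => rw [hSzero, hSbzero, sub_add_cancel]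
  | succ t ih =>
    calc S (t + 1) = A * Sb t * Aᵀ + (A * Pbar t * Aᵀ + Q) := by
          rw [hS t, ih, Matrix.mul_add, Matrix.add_mul, add_assoc]
      _ = A * Sb t * Aᵀ + K (t + 1) * (C * Phat (t + 1) * Cᵀ) * (K (t + 1))ᵀ
          + Pbar (t + 1) := by
          rw [← hPhat t, hPbar, kalmanGain_mul_mul_transpose (hPhat_symm _) (hK _)]
          abel
      _ = Sb (t + 1) + Pbar (t + 1) := by rw [hSb]

/-- **Covariance identity for the a posteriori innovation process.** With `Σ t` (here `S t`) the
state covariance of the original system and `Σ̄ t` (here `Sb t`) the state covariance of the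
abstract model (the a posteriori innovation process), one has `Σ t = Σ̄ t + P̄ t` for all `t`,
where `P̄ t` is the a posteriori Kalman error covariance. -/
theorem innovation_covariance_identity {n q : ℕ}
    (A : Matrix (Fin n) (Fin n) ℝ) (C : Matrix (Fin q) (Fin n) ℝ)
    (S0 Q : Matrix (Fin n) (Fin n) ℝ)
    (hS0 : S0.PosSemidef) (hQ : Q.PosSemidef)
    (hCS0 : (C * S0 * Cᵀ).PosDef) (hCQ : (C * Q * Cᵀ).PosDef)
    (Phat Pbar : ℕ → Matrix (Fin n) (Fin n) ℝ) (K : ℕ → Matrix (Fin n) (Fin q) ℝ)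
    (hPhat0 : Phat 0 = S0)
    (hK : ∀ t, K t = Phat t * Cᵀ * (C * Phat t * Cᵀ)⁻¹)
    (hPbar : ∀ t, Pbar t = Phat t - K t * C * Phat t)
    (hPhat : ∀ t, Phat (t + 1) = A * Pbar t * Aᵀ + Q)
    (S Sb : ℕ → Matrix (Fin n) (Fin n) ℝ)
    (hSzero : S 0 = S0)
    (hS : ∀ t, S (t + 1) = A * S t * Aᵀ + Q)
    (hSbzero : Sb 0 = S0 - Pbar 0)
    (hSb : ∀ t, Sb (t + 1) = A * Sb t * Aᵀ + K (t + 1) * (C * Phat (t + 1) * Cᵀ) * (K (t + 1))ᵀ) :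
    ∀ t, S t = Sb t + Pbar t :=
  innovation_covariance_identity_general A C S0 Q hS0 hQ Phat Pbar K hPhat0 hK hPbar hPhat S Sb
    hSzero hS hSbzero hSb
end

section
/- Let A ∈ ℝ^{n×n}, C ∈ ℝ^{q×n}, and let Σ₀, Q ∈ ℝ^{n×n} be symmetric positive semidefinite with C Σ₀ Cᵀ and C Q Cᵀ positive definite. Define the Kalman covariance recursion: P̂(0) = Σ₀; for t ≥ 0, K(t) = P̂(t) Cᵀ (C P̂(t) Cᵀ)⁻¹, P̄(t) = P̂(t) − K(t) C P̂(t), and P̂(t+1) = A P̄(t) Aᵀ + Q. Define also Σ(0) = Σ₀, Σ(t+1) = A Σ(t) Aᵀ + Q, and Σ̄(0) = Σ₀ − P̄(0), Σ̄(t+1) = A Σ̄(t) Aᵀ + K(t+1) (C P̂(t+1) Cᵀ) K(t+1)ᵀ. Then for every t ≥ 0 and every j ≥ 0, C A^j Σ(t) Cᵀ = C A^j Σ̄(t) Cᵀ; in particular, for any N ∈ ℝ^{p×q} and H := N C, H A^j Σ(t) Hᵀ = H A^j Σ̄(t) Hᵀ. -/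
open Matrix

/-!
The difference `Σ(t) - Σ̄(t)` obeys the recursion of the a posteriori covariance `P̄(t)`, so the
two agree; and `P̄(t) Cᵀ = 0` because the Kalman gain inverts the innovation covariance
`C P̂(t) Cᵀ`. That inverse exists at every step because `P̄(t)`, a Schur complement, stays
positive semidefinite, which keeps `C P̂(t+1) Cᵀ ≥ C Q Cᵀ > 0`.
-/

namespace Matrix

section CommRing

variable {α : Type*} [CommRing α] {m n : Type*} [Fintype m] [Fintype n] [DecidableEq n]

noncomputable def kalmanGain (C : Matrix n m α) (P : Matrix m m α) : Matrix m n α :=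
  P * Cᵀ * (C * P * Cᵀ)⁻¹

noncomputable def posteriorCov (C : Matrix n m α) (P : Matrix m m α) : Matrix m m α :=
  P - kalmanGain C P * C * P

variable {C : Matrix n m α} {P : Matrix m m α}

theorem kalmanGain_mul_innovationCov (h : IsUnit (C * P * Cᵀ).det) :
    kalmanGain C P * (C * P * Cᵀ) = P * Cᵀ :=
  nonsing_inv_mul_cancel_right _ _ h

theorem posteriorCov_mul_transpose (h : IsUnit (C * P * Cᵀ).det) :
    posteriorCov C P * Cᵀ = 0 := by
  have hassoc : kalmanGain C P * C * P * Cᵀ = kalmanGain C P * (C * P * Cᵀ) := by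
    simp only [Matrix.mul_assoc]
  rw [posteriorCov, Matrix.sub_mul, hassoc, kalmanGain_mul_innovationCov h, sub_self]

theorem transpose_kalmanGain (hP : Pᵀ = P) :
    (kalmanGain C P)ᵀ = (C * P * Cᵀ)⁻¹ * (C * P) := by
  have hM : (C * P * Cᵀ)ᵀ = C * P * Cᵀ := by
    rw [transpose_mul, transpose_mul, transpose_transpose, hP, Matrix.mul_assoc]
  rw [kalmanGain, transpose_mul, transpose_nonsing_inv, hM, transpose_mul, transpose_transpose,
    hP]

theorem kalmanGain_mul_innovationCov_mul_transpose (hP : Pᵀ = P)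
    (h : IsUnit (C * P * Cᵀ).det) :
    kalmanGain C P * (C * P * Cᵀ) * (kalmanGain C P)ᵀ = kalmanGain C P * C * P := by
  rw [kalmanGain_mul_innovationCov h, transpose_kalmanGain hP, kalmanGain]
  simp only [Matrix.mul_assoc]

theorem sub_eq_posteriorCov_of_recursions {A Q : Matrix m m α} {P S Sb : ℕ → Matrix m m α}
    (hsymm : ∀ t, (P t)ᵀ = P t) (hunit : ∀ t, IsUnit (C * P t * Cᵀ).det)
    (hP : ∀ t, P (t + 1) = A * posteriorCov C (P t) * Aᵀ + Q)
    (hS : ∀ t, S (t + 1) = A * S t * Aᵀ + Q)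
    (hSb : ∀ t, Sb (t + 1) = A * Sb t * Aᵀ
      + kalmanGain C (P (t + 1)) * (C * P (t + 1) * Cᵀ) * (kalmanGain C (P (t + 1)))ᵀ)
    (h0 : S 0 - Sb 0 = posteriorCov C (P 0)) :
    ∀ t, S t - Sb t = posteriorCov C (P t)
  | 0 => h0
  | t + 1 =>
    calc S (t + 1) - Sb (t + 1)
        = A * (S t - Sb t) * Aᵀ + Q - kalmanGain C (P (t + 1)) * C * P (t + 1) := by
          rw [hS, hSb, kalmanGain_mul_innovationCov_mul_transpose (hsymm _) (hunit _),
            Matrix.mul_sub, Matrix.sub_mul]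
          abel
      _ = posteriorCov C (P (t + 1)) := by
          rw [sub_eq_posteriorCov_of_recursions hsymm hunit hP hS hSb h0 t, ← hP]
          rfl

end CommRing

section Real

variable {m n : Type*} [Fintype m] [Fintype n] [DecidableEq m] [DecidableEq n]

/-- `posteriorCov C P` is the Schur complement of `C * P * Cᵀ` in the Gram matrix
`[1; C] * P * [1; C]ᴴ`. -/
theorem posSemidef_posteriorCov {P : Matrix m m ℝ} (hP : P.PosSemidef) {C : Matrix n m ℝ}
    (hM : (C * P * Cᵀ).PosDef) :
    (posteriorCov C P).PosSemidef := by
  have := hM.isUnit.invertible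
  have hPC : (P * Cᵀ)ᴴ = C * P := by
    rw [conjTranspose_eq_transpose_of_trivial, transpose_mul, transpose_transpose,
      ← conjTranspose_eq_transpose_of_trivial, hP.isHermitian.eq]
  have hblock : fromRows 1 C * P * (fromRows 1 C)ᴴ
      = fromBlocks P (P * Cᵀ) (P * Cᵀ)ᴴ (C * P * Cᵀ) := by
    rw [conjTranspose_fromRows_eq_fromCols_conjTranspose, Matrix.mul_assoc, mul_fromCols,
      fromRows_mul_fromCols, hPC, conjTranspose_eq_transpose_of_trivial C]
    simp [Matrix.mul_assoc]
  have hschur := (PosDef.fromBlocks₂₂ P (P * Cᵀ) hM).1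
    (hblock ▸ hP.mul_mul_conjTranspose_same _)
  rw [hPC, ← Matrix.mul_assoc] at hschur
  exact hschur

theorem posSemidef_and_posDef_of_riccati {A Q : Matrix m m ℝ} {C : Matrix n m ℝ}
    {P : ℕ → Matrix m m ℝ} (hP0 : (P 0).PosSemidef) (hM0 : (C * P 0 * Cᵀ).PosDef)
    (hQ : Q.PosSemidef) (hCQ : (C * Q * Cᵀ).PosDef)
    (hP : ∀ t, P (t + 1) = A * posteriorCov C (P t) * Aᵀ + Q) :
    ∀ t, (P t).PosSemidef ∧ (C * P t * Cᵀ).PosDef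
  | 0 => ⟨hP0, hM0⟩
  | t + 1 => by
    obtain ⟨hPt, hMt⟩ := posSemidef_and_posDef_of_riccati hP0 hM0 hQ hCQ hP t
    have hPost := posSemidef_posteriorCov hPt hMt
    have hsplit : C * (A * posteriorCov C (P t) * Aᵀ + Q) * Cᵀ
        = (C * A) * posteriorCov C (P t) * (C * A)ᴴ + C * Q * Cᵀ := by
      simp [Matrix.mul_add, Matrix.add_mul, Matrix.mul_assoc]
    rw [hP t, hsplit]
    exact ⟨by simpa using (hPost.mul_mul_conjTranspose_same A).add hQ,
      PosDef.posSemidef_add (hPost.mul_mul_conjTranspose_same (C * A)) hCQ⟩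

end Real

end Matrix

/-- **Equality of output cross-covariances of the original and abstract models.** With `Σ t`
(here `S t`) the state covariance of the original system and `Σ̄ t` (here `Sb t`) the state
covariance of the a posteriori innovation process, for all `t, j` one has
`C * A ^ j * Σ t * Cᵀ = C * A ^ j * Σ̄ t * Cᵀ`; in particular, for every `N` and `H := N * C`,
`H * A ^ j * Σ t * Hᵀ = H * A ^ j * Σ̄ t * Hᵀ`. -/
theorem output_cross_covariances_eq {n q : ℕ}
    (A : Matrix (Fin n) (Fin n) ℝ) (C : Matrix (Fin q) (Fin n) ℝ)
    (S0 Q : Matrix (Fin n) (Fin n) ℝ)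
    (hS0 : S0.PosSemidef) (hQ : Q.PosSemidef)
    (hCS0 : (C * S0 * Cᵀ).PosDef) (hCQ : (C * Q * Cᵀ).PosDef)
    (Phat Pbar : ℕ → Matrix (Fin n) (Fin n) ℝ) (K : ℕ → Matrix (Fin n) (Fin q) ℝ)
    (hPhat0 : Phat 0 = S0)
    (hK : ∀ t, K t = Phat t * Cᵀ * (C * Phat t * Cᵀ)⁻¹)
    (hPbar : ∀ t, Pbar t = Phat t - K t * C * Phat t)
    (hPhat : ∀ t, Phat (t + 1) = A * Pbar t * Aᵀ + Q)
    (S Sb : ℕ → Matrix (Fin n) (Fin n) ℝ)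
    (hSzero : S 0 = S0)
    (hS : ∀ t, S (t + 1) = A * S t * Aᵀ + Q)
    (hSbzero : Sb 0 = S0 - Pbar 0)
    (hSb : ∀ t, Sb (t + 1) = A * Sb t * Aᵀ + K (t + 1) * (C * Phat (t + 1) * Cᵀ) * (K (t + 1))ᵀ) :
    ∀ t j : ℕ,
      C * A ^ j * S t * Cᵀ = C * A ^ j * Sb t * Cᵀ ∧
      ∀ (p : ℕ) (N : Matrix (Fin p) (Fin q) ℝ),
        (N * C) * A ^ j * S t * (N * C)ᵀ = (N * C) * A ^ j * Sb t * (N * C)ᵀ := by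
  have hK' : ∀ t, K t = kalmanGain C (Phat t) := hK
  have hPbar' : ∀ t, Pbar t = posteriorCov C (Phat t) := fun t => by rw [hPbar, hK']; rfl
  have hPhat' : ∀ t, Phat (t + 1) = A * posteriorCov C (Phat t) * Aᵀ + Q := by
    simpa only [hPbar'] using hPhat
  have hPos := posSemidef_and_posDef_of_riccati (hPhat0 ▸ hS0) (hPhat0 ▸ hCS0)
    hQ hCQ hPhat'
  have hunit t : IsUnit (C * Phat t * Cᵀ).det := (isUnit_iff_isUnit_det _).1 (hPos t).2.isUnit
  have hsymm t : (Phat t)ᵀ = Phat t := by simpa using (hPos t).1.isHermitian.eq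
  have hgap := sub_eq_posteriorCov_of_recursions hsymm hunit hPhat' hS
    (by simpa only [hK'] using hSb)
    (by rw [hSzero, hSbzero, sub_sub_cancel, hPbar'])
  intro t j
  have hcross : C * A ^ j * S t * Cᵀ = C * A ^ j * Sb t * Cᵀ := by
    rw [← sub_eq_zero, ← Matrix.sub_mul, ← Matrix.mul_sub, hgap, Matrix.mul_assoc,
      posteriorCov_mul_transpose (hunit t), Matrix.mul_zero]
  refine ⟨hcross, fun p N => ?_⟩
  simpa only [transpose_mul, Matrix.mul_assoc] using congrArg (N * · * Nᵀ) hcross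
end
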